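/- arXiv:2205.04786 — 7 statements merged into one kernel-verified Lean document; each statement's English description precedes it below -/
import Mathlib

section
/- For every natural number N ≥ 1, there exists a Lebesgue measurable subset S of ℝ such that the Lebesgue measure of S ∩ [m, m+1] equals 1 − 1/N for every integer m, but there is no x ∈ S and no real number Δ > 0 such that x + nΔ ∈ S for all natural numbers n. -/
open MeasureTheory Set

/-!
Cut out of every unit interval `[m, m + 1]` a closed hole of length `1 / N`, placed in the
slot `⌊√m⌋ mod N` of the subdivision of `[m, m + 1]` into `N` equal pieces. Along any
arithmetic progression `x + nΔ` the fractional parts return to some fixed slot `i` with bounded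
gaps: by Dirichlet's theorem some multiple `dΔ` lies within `1 / (N + 1)` of an integer, so the
progression `x + (n₀ + t d)Δ` either keeps the fractional part of `x` or rotates it with a
nonzero step shorter than a slot, sweeping every slot. On the other hand `⌊√m⌋` is constant
on the blocks `[s², (s + 1)²)`, whose length `2s + 1` eventually exceeds any window of
bounded length. Taking `s ≡ i mod N` large, the progression enters a hole.
-/

lemma exists_add_nat_mul_mem_Ico {ε : ℝ} (hε : 0 < ε) {y a : ℝ} (hya : y ≤ a) :
    ∃ t : ℕ, (t : ℝ) ≤ (a - y) / ε + 1 ∧ y + t * ε ∈ Ico a (a + ε) := by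
  have h0 : 0 ≤ (a - y) / ε := div_nonneg (sub_nonneg.2 hya) hε.le
  have hlt := Nat.ceil_lt_add_one h0
  have hle := Nat.le_ceil ((a - y) / ε)
  refine ⟨⌈(a - y) / ε⌉₊, hlt.le, ?_, ?_⟩
  · have := mul_le_mul_of_nonneg_right hle hε.le
    rw [div_mul_cancel₀ _ hε.ne'] at this
    linarith
  · have := mul_lt_mul_of_pos_right hlt hε
    rw [add_mul, div_mul_cancel₀ _ hε.ne'] at this
    linarith

lemma Int.fract_le_sub_of_le {R : Type*} [Ring R] [LinearOrder R] [FloorRing R]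
    [IsOrderedRing R] {z : R} {m : ℤ} (h : (m : R) ≤ z) : Int.fract z ≤ z - m := by
  rw [Int.fract]
  exact sub_le_sub_left (Int.cast_le.2 (Int.le_floor.2 h)) z

lemma exists_fract_add_nat_mul_le {ε w : ℝ} (hε : ε ≠ 0) (hεw : |ε| ≤ w) :
    ∃ K : ℕ, ∀ y : ℝ, ∃ t ≤ K, Int.fract (y + t * ε) ≤ w := by
  have habs : 0 < |ε| := abs_pos.2 hε
  refine ⟨⌈1 / |ε|⌉₊ + 1, fun y => ?_⟩
  have hK : ∀ {t : ℕ} {r : ℝ}, r ≤ 1 → (t : ℝ) ≤ r / |ε| + 1 → t ≤ ⌈1 / |ε|⌉₊ + 1 := by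
    intro t r hr ht
    have : r / |ε| ≤ ⌈1 / |ε|⌉₊ :=
      (div_le_div_of_nonneg_right hr habs.le).trans (Nat.le_ceil _)
    have : (t : ℝ) ≤ ⌈1 / |ε|⌉₊ + 1 := by linarith
    exact_mod_cast this
  rcases hε.lt_or_gt with hneg | hpos
  · -- walk down from `y` to the last point not below `⌊y + ε⌋`
    rw [abs_of_neg hneg] at hεw
    have hfl := Int.floor_le (y + ε)
    have hfl' := Int.lt_floor_add_one (y + ε)
    obtain ⟨t, ht, hmem⟩ := exists_add_nat_mul_mem_Ico (neg_pos.2 hneg) (y := -y)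
      (a := -⌊y + ε⌋ + ε) (by linarith)
    refine ⟨t, hK (r := y + ε - ⌊y + ε⌋) (by linarith)
      (by rwa [abs_of_neg hneg, show y + ε - ⌊y + ε⌋ = -⌊y + ε⌋ + ε - -y by ring]), ?_⟩
    have := Int.fract_le_sub_of_le (z := y + t * ε) (m := ⌊y + ε⌋) (by linarith [hmem.2])
    linarith [hmem.1]
  · rw [abs_of_pos hpos] at hεw
    have hfl := Int.floor_le y
    have hfl' := Int.lt_floor_add_one y
    obtain ⟨t, ht, hmem⟩ := exists_add_nat_mul_mem_Ico hpos (y := y) (a := ⌊y⌋ + 1) hfl'.le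
    refine ⟨t, hK (r := ⌊y⌋ + 1 - y) (by linarith) (by rwa [abs_of_pos hpos]), ?_⟩
    have := Int.fract_le_sub_of_le (z := y + t * ε) (m := ⌊y⌋ + 1) (by push_cast; exact hmem.1)
    push_cast at this
    linarith [hmem.2]

lemma exists_lt_mem_Icc_div {N : ℕ} (hN : 0 < N) {f : ℝ} (hf₀ : 0 ≤ f) (hf₁ : f < 1) :
    ∃ i < N, f ∈ Icc ((i : ℝ) / N) ((i + 1) / N) := by
  have hN' : (0 : ℝ) < N := mod_cast hN
  have hNf : 0 ≤ N * f := mul_nonneg hN'.le hf₀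
  refine ⟨⌊N * f⌋₊, (Nat.floor_lt hNf).2 (by nlinarith), ?_, ?_⟩
  · rw [div_le_iff₀ hN']
    linarith [Nat.floor_le hNf]
  · rw [le_div_iff₀ hN']
    linarith [Nat.lt_floor_add_one (N * f)]

lemma exists_fract_add_mul_mem_Icc_div_bounded_gaps {N : ℕ} (hN : 0 < N) (x Δ : ℝ) :
    ∃ i < N, ∃ B : ℕ, ∀ n₀ : ℕ, ∃ n, n₀ ≤ n ∧ n ≤ n₀ + B ∧
      Int.fract (x + n * Δ) ∈ Icc ((i : ℝ) / N) ((i + 1) / N) := by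
  obtain ⟨d, hd, -, hε⟩ := Real.exists_nat_abs_mul_sub_round_le Δ hN
  set ε := d * Δ - round (d * Δ)
  have hstep (y : ℝ) (t : ℕ) : Int.fract (y + (t * d : ℕ) * Δ) = Int.fract (y + t * ε) := by
    rw [← Int.fract_add_intCast (y + t * ε) (t * round (d * Δ))]
    push_cast
    congr 1
    simp only [ε]
    ring
  by_cases hε0 : ε = 0
  · -- `dΔ` is an integer: along multiples of `d` the fractional part stays that of `x`
    obtain ⟨i, hi, hx⟩ := exists_lt_mem_Icc_div hN (Int.fract_nonneg x) (Int.fract_lt_one x)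
    refine ⟨i, hi, d, fun n₀ => ⟨(n₀ / d + 1) * d, ?_, ?_, ?_⟩⟩
    · have := Nat.lt_div_mul_add (a := n₀) hd
      rw [add_mul, one_mul]
      omega
    · have := Nat.div_mul_le_self n₀ d
      rw [add_mul, one_mul]
      omega
    · rwa [hstep, hε0, mul_zero, add_zero]
  · have hεN : |ε| ≤ 1 / N := hε.trans (one_div_le_one_div_of_le (by positivity) (by linarith))
    obtain ⟨K, hK⟩ := exists_fract_add_nat_mul_le hε0 hεN
    refine ⟨0, hN, K * d, fun n₀ => ?_⟩
    obtain ⟨t, htK, ht⟩ := hK (x + n₀ * Δ)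
    refine ⟨n₀ + t * d, Nat.le_add_right _ _,
      Nat.add_le_add_left (Nat.mul_le_mul_right d htK) n₀, ?_⟩
    rw [Nat.cast_add, add_mul, ← add_assoc, hstep]
    exact ⟨by simp [Int.fract_nonneg], by simpa using ht⟩

lemma exists_add_mul_mem_Ico_sq {x Δ : ℝ} (hΔ : 0 < Δ) {B s : ℕ} (hx : x ≤ s ^ 2)
    (hs : (B + 1) * Δ ≤ 2 * s + 1) :
    ∃ n₀ : ℕ, ∀ n : ℕ, n₀ ≤ n → n ≤ n₀ + B → x + n * Δ ∈ Ico ((s : ℝ) ^ 2) ((s + 1) ^ 2) := by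
  obtain ⟨n₀, -, hlo, hhi⟩ := exists_add_nat_mul_mem_Ico hΔ hx
  refine ⟨n₀, fun n h₀ hB => ⟨?_, ?_⟩⟩
  · have : (n₀ : ℝ) ≤ n := mod_cast h₀
    nlinarith
  · have : (n : ℝ) ≤ n₀ + B := mod_cast hB
    nlinarith

/-- Since `m.toNat = 0` for `m < 0`, all holes left of `0` sit in slot `0`. -/
def holeIndex (N : ℕ) (m : ℤ) : ℕ := Nat.sqrt m.toNat % N

def hole (N : ℕ) (m : ℤ) : Set ℝ := Icc (m + holeIndex N m / N) (m + (holeIndex N m + 1) / N)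

def holes (N : ℕ) : Set ℝ := ⋃ m : ℤ, hole N m

lemma holeIndex_eq_mod_of_mem_Ico_sq {N s : ℕ} {m : ℤ} (hm : m ∈ Ico ((s : ℤ) ^ 2) ((s + 1) ^ 2)) :
    holeIndex N m = s % N := by
  lift m to ℕ using (sq_nonneg _).trans hm.1
  have hm' : m ∈ Ico (s ^ 2) ((s + 1) ^ 2) := ⟨by exact_mod_cast hm.1, by exact_mod_cast hm.2⟩
  rw [holeIndex, Int.toNat_natCast, ← Nat.eq_sqrt'.2 hm']

lemma hole_subset_Icc {N : ℕ} (hN : 0 < N) (m : ℤ) : hole N m ⊆ Icc (m : ℝ) (m + 1) := by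
  have hN' : (0 : ℝ) < N := mod_cast hN
  have hi : (holeIndex N m + 1 : ℝ) ≤ N := mod_cast Nat.mod_lt _ hN
  apply Icc_subset_Icc
  · have : (0 : ℝ) ≤ holeIndex N m / N := by positivity
    linarith
  · have : (holeIndex N m + 1 : ℝ) / N ≤ 1 := (div_le_one hN').2 hi
    linarith

lemma volume_hole (N : ℕ) (m : ℤ) : volume (hole N m) = ENNReal.ofReal (1 / N) := by
  rw [hole, Real.volume_Icc]
  ring_nf

lemma measurableSet_holes (N : ℕ) : MeasurableSet (holes N) :=
  MeasurableSet.iUnion fun _ => measurableSet_Icc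

lemma Ioo_inter_holes {N : ℕ} (hN : 0 < N) (m : ℤ) :
    Ioo (m : ℝ) (m + 1) ∩ holes N = Ioo (m : ℝ) (m + 1) ∩ hole N m := by
  refine Subset.antisymm ?_ (inter_subset_inter_right _ (subset_iUnion (hole N) m))
  rintro y ⟨hy, hy'⟩
  obtain ⟨m', hm'⟩ := mem_iUnion.1 hy'
  have hm'y := hole_subset_Icc hN m' hm'
  have h₁ : (m' : ℝ) < m + 1 := hm'y.1.trans_lt hy.2
  have h₂ : (m : ℝ) < m' + 1 := hy.1.trans_le hm'y.2
  obtain rfl : m' = m := by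
    have : m' < m + 1 := by exact_mod_cast h₁
    have : m < m' + 1 := by exact_mod_cast h₂
    omega
  exact ⟨hy, hm'⟩

lemma volume_Icc_diff_holes {N : ℕ} (hN : 0 < N) (m : ℤ) :
    volume (Icc (m : ℝ) (m + 1) \ holes N) = ENNReal.ofReal (1 - 1 / N) := by
  calc volume (Icc (m : ℝ) (m + 1) \ holes N)
      = volume (Ioo (m : ℝ) (m + 1) \ holes N) :=
        measure_congr (Ioo_ae_eq_Icc.symm.diff (Filter.EventuallyEq.refl _ _))
    _ = volume (Ioo (m : ℝ) (m + 1) \ hole N m) := by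
        rw [← sdiff_inter_self_eq_sdiff, inter_comm, Ioo_inter_holes hN, inter_comm,
          sdiff_inter_self_eq_sdiff]
    _ = volume (Icc (m : ℝ) (m + 1) \ hole N m) :=
        measure_congr (Ioo_ae_eq_Icc.diff (Filter.EventuallyEq.refl _ _))
    _ = ENNReal.ofReal (1 - 1 / N) := by
        rw [measure_sdiff (hole_subset_Icc hN m) measurableSet_Icc.nullMeasurableSet
          (by simp [volume_hole]), volume_hole, Real.volume_Icc, add_sub_cancel_left,
          ENNReal.ofReal_sub _ (by positivity)]

lemma mem_holes_of_fract_mem {N : ℕ} {z : ℝ}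
    (h : Int.fract z ∈ Icc ((holeIndex N ⌊z⌋ : ℝ) / N) ((holeIndex N ⌊z⌋ + 1) / N)) :
    z ∈ holes N := by
  refine mem_iUnion.2 ⟨⌊z⌋, ?_, ?_⟩ <;> linarith [h.1, h.2, Int.floor_add_fract z]

lemma exists_add_mul_mem_holes {N : ℕ} (hN : 0 < N) (x : ℝ) {Δ : ℝ} (hΔ : 0 < Δ) :
    ∃ n : ℕ, x + n * Δ ∈ holes N := by
  obtain ⟨i, hi, B, hB⟩ := exists_fract_add_mul_mem_Icc_div_bounded_gaps hN x Δ
  set L := ⌈max x ((B + 1) * Δ)⌉₊ + 1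
  set s := i + N * L
  have hsi : s % N = i := by rw [Nat.add_mul_mod_self_left, Nat.mod_eq_of_lt hi]
  have hLs : (L : ℝ) ≤ s := mod_cast (Nat.le_mul_of_pos_left L hN).trans (Nat.le_add_left _ i)
  have hmax : max x ((B + 1) * Δ) + 1 ≤ s := by
    have := Nat.le_ceil (max x ((B + 1) * Δ))
    push_cast [L] at hLs
    linarith
  have hx : x ≤ s ^ 2 := by nlinarith [le_max_left x ((B + 1) * Δ)]
  obtain ⟨n₀, hn₀⟩ := exists_add_mul_mem_Ico_sq hΔ (B := B) hx
    (by linarith [le_max_right x ((B + 1) * Δ)])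
  obtain ⟨n, h₀, hB', hn⟩ := hB n₀
  have hsq := hn₀ n h₀ hB'
  have hfl : ⌊x + n * Δ⌋ ∈ Ico ((s : ℤ) ^ 2) ((s + 1) ^ 2) :=
    ⟨Int.le_floor.2 (by exact_mod_cast hsq.1), Int.floor_lt.2 (by exact_mod_cast hsq.2)⟩
  exact ⟨n, mem_holes_of_fract_mem (by rwa [holeIndex_eq_mod_of_mem_Ico_sq hfl, hsi])⟩

/-- For every `N ≥ 1` there is a measurable `S ⊆ ℝ` meeting every interval `[m, m+1]`
(`m ∈ ℤ`) in measure exactly `1 - 1/N`, containing no infinite arithmetic progression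
with positive gap. -/
theorem stmt_0 (N : ℕ) (hN : 1 ≤ N) :
    ∃ S : Set ℝ, MeasurableSet S ∧
      (∀ m : ℤ, volume (S ∩ Set.Icc (m : ℝ) ((m : ℝ) + 1)) =
        ENNReal.ofReal (1 - 1 / N)) ∧
      ¬ ∃ x ∈ S, ∃ Δ : ℝ, 0 < Δ ∧ ∀ n : ℕ, x + (n : ℝ) * Δ ∈ S := by
  refine ⟨(holes N)ᶜ, (measurableSet_holes N).compl, fun m => ?_, ?_⟩
  · rw [inter_comm, ← sdiff_eq]
    exact volume_Icc_diff_holes hN m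
  · rintro ⟨x, -, Δ, hΔ, hS⟩
    obtain ⟨n, hn⟩ := exists_add_mul_mem_holes hN x hΔ
    exact hS n hn
end

section
/- Fix an integer N ≥ 1 and let S be the set defined in the context. Then S does not contain any infinite arithmetic progression with positive integer gap; that is, there is no x ∈ S and no positive integer Δ such that x + nΔ ∈ S for all natural numbers n. -/
open MeasureTheory

noncomputable section

/-- The geometric sums `β_k = Σ_{j=0}^{k-1} (N+1)^j`. -/
def beta (N k : ℕ) : ℕ := ∑ j ∈ Finset.range k, (N + 1) ^ j

/-- The deleted intervals `Q_i = [i/N, (i+1)/N)`. -/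
def Qset (N i : ℕ) : Set ℝ := Set.Ico ((i : ℝ) / N) (((i : ℝ) + 1) / N)

/-- `R_i = [0,1) \ Q_i`. -/
def Rset (N i : ℕ) : Set ℝ := Set.Ico (0 : ℝ) 1 \ Qset N i

/-- For `m ≥ 0`, the unique `k` with `β_k ≤ m < β_{k+1}`. -/
def kIdx (N m : ℕ) : ℕ := Nat.findGreatest (fun k => beta N k ≤ m) m

/-- `S_m` for nonnegative `m` : `S_0 = R_0`, and `S_m = m + R_{(k mod N)}` for `m > 0`. -/
def Spos (N m : ℕ) : Set ℝ :=
  if m = 0 then Rset N 0 else (fun x => x + (m : ℝ)) '' Rset N (kIdx N m % N)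

/-- `S_m` for all integers `m`: for `m < 0`, `S_m = 2m + S_{|m|}`. -/
def Sm (N : ℕ) (m : ℤ) : Set ℝ :=
  if 0 ≤ m then Spos N m.toNat else (fun x => x + 2 * (m : ℝ)) '' Spos N m.natAbs

/-- The set `S = ⋃_{m ∈ ℤ} S_m`. -/
def SetS (N : ℕ) : Set ℝ := ⋃ m : ℤ, Sm N m

/-!
Every `y ∈ S_m` has `⌊y⌋ = m` and `fract y ∈ R_i`, where `i = k mod N` is determined by the block
`β_k ≤ |m| < β_{k+1}` containing `|m|`. Along a progression `x + nΔ` the fractional part is the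
constant `f = fract x`, which lies in some `Q_r`, while the integer parts `⌊x⌋ + nΔ` cannot jump over
a block of length `(N+1)^k > Δ`. Choosing `k ≡ r (mod N)` large gives `f ∈ R_r = [0,1) \ Q_r`,
a contradiction.
-/

/-- The index `i` with `S_m = m + R_i` for `m ≥ 0`; then also `S_{-m} = -m + R_i`. -/
def rIdx (N m : ℕ) : ℕ := if m = 0 then 0 else kIdx N m % N

lemma beta_succ (N k : ℕ) : beta N (k + 1) = beta N k + (N + 1) ^ k := Finset.sum_range_succ _ _

lemma le_beta (N k : ℕ) : k ≤ beta N k := by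
  calc k = ∑ _j ∈ Finset.range k, 1 := by simp
    _ ≤ beta N k := Finset.sum_le_sum fun j _ => Nat.one_le_pow _ _ (by omega)

lemma kIdx_eq {N k m : ℕ} (h₁ : beta N k ≤ m) (h₂ : m < beta N (k + 1)) : kIdx N m = k := by
  refine Nat.findGreatest_eq_iff.2 ⟨(le_beta N k).trans h₁, fun _ => h₁, fun j hkj _ hj => ?_⟩
  have hβ : beta N (k + 1) ≤ beta N j := Finset.sum_le_sum_of_subset
    (Finset.range_subset_range.2 (show k + 1 ≤ j by omega))
  exact absurd (hj.trans_lt h₂) (not_lt.2 hβ)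

lemma sub_mem_Rset_of_mem_Spos {N m : ℕ} {y : ℝ} (h : y ∈ Spos N m) :
    y - m ∈ Rset N (rIdx N m) := by
  rw [Spos] at h
  split_ifs at h with hm
  · simpa [rIdx, hm] using h
  · obtain ⟨r, hr, rfl⟩ := h
    simpa [rIdx, hm] using hr

lemma sub_mem_Rset_of_mem_Sm {N : ℕ} {m : ℤ} {y : ℝ} (h : y ∈ Sm N m) :
    y - m ∈ Rset N (rIdx N m.natAbs) := by
  rw [Sm] at h
  split_ifs at h with hm
  · obtain ⟨k, rfl⟩ := Int.eq_ofNat_of_zero_le hm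
    simpa using sub_mem_Rset_of_mem_Spos h
  · obtain ⟨s, hs, rfl⟩ := h
    have hR := sub_mem_Rset_of_mem_Spos hs
    rw [Nat.cast_natAbs, Int.cast_abs, abs_of_neg (by exact_mod_cast not_le.1 hm)] at hR
    convert hR using 1
    ring

lemma fract_mem_Rset_of_mem_SetS {N : ℕ} {y : ℝ} (h : y ∈ SetS N) :
    Int.fract y ∈ Rset N (rIdx N ⌊y⌋.natAbs) := by
  obtain ⟨m, hm⟩ := Set.mem_iUnion.1 h
  have hR := sub_mem_Rset_of_mem_Sm hm
  obtain rfl : ⌊y⌋ = m := Int.floor_eq_iff.2 ⟨by linarith [hR.1.1], by linarith [hR.1.2]⟩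
  exact hR

lemma mem_Qset_floor_mul {N : ℕ} (hN : 0 < N) {f : ℝ} (hf : f ∈ Set.Ico (0 : ℝ) 1) :
    ⌊f * N⌋₊ < N ∧ f ∈ Qset N ⌊f * N⌋₊ := by
  have hN' : (0 : ℝ) < N := by exact_mod_cast hN
  refine ⟨(Nat.floor_lt (by nlinarith [hf.1])).2 (by nlinarith [hf.2]), ?_, ?_⟩
  · rw [div_le_iff₀ hN']; exact Nat.floor_le (by nlinarith [hf.1])
  · rw [lt_div_iff₀ hN']; exact Nat.lt_floor_add_one _

lemma exists_add_mul_mem_Ico (a b : ℤ) {Δ L : ℕ} (hΔ : 0 < Δ) (hL : Δ ≤ L) (hab : a ≤ b) :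
    ∃ n : ℕ, a + n * Δ ∈ Set.Ico b (b + L) := by
  obtain ⟨n, ⟨h₁, h₂⟩, -⟩ := existsUnique_add_zsmul_mem_Ico (Int.natCast_pos.2 hΔ) a b
  rw [smul_eq_mul] at h₁ h₂
  have hn : 0 ≤ n := nonneg_of_mul_nonneg_left (by linarith) (Int.natCast_pos.2 hΔ)
  exact ⟨n.toNat, by rw [Int.toNat_of_nonneg hn]; exact ⟨h₁, by omega⟩⟩

lemma rIdx_natAbs_eq {N k : ℕ} (hk : 0 < k) {m : ℤ}
    (hm : m ∈ Set.Ico (beta N k : ℤ) (beta N k + ((N + 1) ^ k : ℕ))) :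
    rIdx N m.natAbs = k % N := by
  obtain ⟨h₁, h₂⟩ := hm
  have hkβ := le_beta N k
  have hβ := beta_succ N k
  obtain ⟨m, rfl⟩ := Int.eq_ofNat_of_zero_le (show 0 ≤ m by omega)
  rw [Int.natAbs_natCast, rIdx, if_neg (by omega), kIdx_eq (k := k) (by omega) (by omega)]

lemma fract_mem_Rset_of_add_mem_SetS {N j : ℕ} {x : ℝ} (h : x + j ∈ SetS N) :
    Int.fract x ∈ Rset N (rIdx N (⌊x⌋ + j).natAbs) := by
  simpa only [Int.fract_add_natCast, Int.floor_add_natCast] using fract_mem_Rset_of_mem_SetS h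

/-- `S` contains no infinite arithmetic progression with positive integer gap. -/
theorem stmt_1 (N : ℕ) (hN : 1 ≤ N) :
    ¬ ∃ x ∈ SetS N, ∃ Δ : ℕ, 0 < Δ ∧ ∀ n : ℕ, x + (n : ℝ) * (Δ : ℝ) ∈ SetS N := by
  rintro ⟨x, -, Δ, hΔ, hAP⟩
  obtain ⟨hrN, hQ⟩ := mem_Qset_floor_mul hN ⟨Int.fract_nonneg x, Int.fract_lt_one x⟩
  set r := ⌊Int.fract x * N⌋₊
  -- a block `[β_k, β_{k+1})` with `k ≡ r (mod N)`, lying beyond `⌊x⌋` and longer than `Δ`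
  set k := r + N * (Δ + ⌊x⌋.toNat + 1)
  have hkr : k % N = r := by rw [Nat.add_mul_mod_self_left, Nat.mod_eq_of_lt hrN]
  have hkΔ : Δ + ⌊x⌋.toNat + 1 ≤ k := (Nat.le_mul_of_pos_left _ hN).trans (Nat.le_add_left _ _)
  have hΔ_le : Δ ≤ (N + 1) ^ k := (Nat.lt_pow_self (by omega)).le.trans' (by omega)
  have hx_le : ⌊x⌋ ≤ beta N k := by have := le_beta N k; omega
  obtain ⟨n, hn⟩ := exists_add_mul_mem_Ico ⌊x⌋ (beta N k) hΔ hΔ_le hx_le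
  have hR := fract_mem_Rset_of_add_mem_SetS (j := n * Δ) (by simpa using hAP n)
  rw [Nat.cast_mul, rIdx_natAbs_eq (by omega) hn, hkr] at hR
  exact hR.2 hQ
end
end

section
/- Suppose that for every real number μ in [0,1) there exists a Lebesgue measurable subset S of ℝ such that the Lebesgue measure of S ∩ [a, a+1] is at least μ for every real a, and such that there is no x ∈ S and no irrational Δ > 0 with x + nΔ ∈ S for all natural numbers n. Then for every real number λ in [0,1) there exists a Lebesgue measurable subset T of ℝ such that the Lebesgue measure of T ∩ [a, a+1] is at least λ for every real a, and such that there is no x ∈ T and no real Δ > 0 whatsoever with x + nΔ ∈ T for all natural numbers n. -/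
/-!
Take `T = S ∩ √2 • S`, where `S` misses at most `δ` of every unit interval. Dilating by
`√2 ≥ 1` costs at most a factor `√2` in the missing measure, so `T` misses at most
`(1 + √2) δ`, which is `≤ 1 - λ` for `δ = (1 - λ) / 3`. A progression `x + nΔ` in `T` gives the
progressions `x + nΔ` and `x / √2 + n (Δ / √2)` in `S`, and `Δ`, `Δ / √2` cannot both be rational.
-/

open MeasureTheory Set
open scoped Pointwise

def MissesAtMost (S : Set ℝ) (δ : ℝ) : Prop :=
  ∀ a : ℝ, volume (Icc a (a + 1) \ S) ≤ ENNReal.ofReal δ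

lemma missesAtMost_one_sub {S : Set ℝ} (hS : MeasurableSet S) {m : ℝ} (hm : 0 ≤ m)
    (h : ∀ a : ℝ, ENNReal.ofReal m ≤ volume (S ∩ Icc a (a + 1))) :
    MissesAtMost S (1 - m) := fun a ↦ by
  rw [ENNReal.ofReal_sub 1 hm, ENNReal.ofReal_one]
  refine ENNReal.le_sub_of_add_le_right ENNReal.ofReal_ne_top ?_
  calc volume (Icc a (a + 1) \ S) + ENNReal.ofReal m
      ≤ volume (Icc a (a + 1) \ S) + volume (Icc a (a + 1) ∩ S) := by
        rw [inter_comm]; gcongr; exact h a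
    _ = 1 := by rw [measure_sdiff_add_inter _ hS, Real.volume_Icc]; simp

lemma MissesAtMost.ofReal_le_volume_inter {T : Set ℝ} {m : ℝ} (hT : MissesAtMost T (1 - m))
    (hm : m ≤ 1) (a : ℝ) : ENNReal.ofReal m ≤ volume (T ∩ Icc a (a + 1)) := by
  have hcover : 1 ≤ volume (T ∩ Icc a (a + 1)) + ENNReal.ofReal (1 - m) := calc
    1 = volume (Icc a (a + 1)) := by simp [Real.volume_Icc]
    _ ≤ volume (Icc a (a + 1) ∩ T) + volume (Icc a (a + 1) \ T) := measure_le_inter_add_sdiff ..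
    _ ≤ _ := by rw [inter_comm]; gcongr; exact hT a
  calc ENNReal.ofReal m = ENNReal.ofReal 1 - ENNReal.ofReal (1 - m) := by
        rw [← ENNReal.ofReal_sub 1 (sub_nonneg.mpr hm), sub_sub_cancel]
    _ ≤ volume (T ∩ Icc a (a + 1)) := by rw [ENNReal.ofReal_one]; exact tsub_le_iff_right.mpr hcover

lemma MissesAtMost.inter {S S' : Set ℝ} {δ δ' : ℝ} (hS : MissesAtMost S δ)
    (hS' : MissesAtMost S' δ') (hδ : 0 ≤ δ) (hδ' : 0 ≤ δ') :
    MissesAtMost (S ∩ S') (δ + δ') := fun a ↦ calc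
  volume (Icc a (a + 1) \ (S ∩ S')) ≤ volume (Icc a (a + 1) \ S) + volume (Icc a (a + 1) \ S') := by
    rw [sdiff_inter]; exact measure_union_le ..
  _ ≤ ENNReal.ofReal (δ + δ') := by rw [ENNReal.ofReal_add hδ hδ']; gcongr <;> apply_assumption

lemma MissesAtMost.smul {S : Set ℝ} {δ c : ℝ} (hS : MissesAtMost S δ) (hc : 1 ≤ c) :
    MissesAtMost (c • S) (c * δ) := fun a ↦ by
  have hc0 : 0 < c := by positivity
  have hsub : Icc a (a + 1) \ c • S ⊆ c • (Icc (a / c) (a / c + 1) \ S) := by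
    rintro y ⟨⟨hay, hya⟩, hyS⟩
    rw [mem_smul_set_iff_inv_smul_mem₀ hc0.ne'] at hyS ⊢
    refine ⟨⟨?_, ?_⟩, hyS⟩ <;> rw [smul_eq_mul, inv_mul_eq_div]
    · gcongr
    · calc y / c ≤ (a + 1) / c := by gcongr
        _ ≤ a / c + 1 := by rw [add_div]; gcongr; exact div_le_one_of_le₀ hc hc0.le
  calc volume (Icc a (a + 1) \ c • S) ≤ volume (c • (Icc (a / c) (a / c + 1) \ S)) :=
        measure_mono hsub
    _ = ENNReal.ofReal c * volume (Icc (a / c) (a / c + 1) \ S) := by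
      simp [Measure.addHaar_smul, abs_of_pos hc0]
    _ ≤ ENNReal.ofReal (c * δ) := by
      rw [ENNReal.ofReal_mul hc0.le]; gcongr; exact hS _

lemma add_mul_mem_of_add_mul_mem_smul {S : Set ℝ} {c x Δ : ℝ} (hc : c ≠ 0)
    (h : ∀ n : ℕ, x + n * Δ ∈ c • S) (n : ℕ) : x / c + n * (Δ / c) ∈ S := by
  have := h n
  rw [mem_smul_set_iff_inv_smul_mem₀ hc, smul_eq_mul] at this
  convert this using 1; field_simp

lemma Irrational.irrational_or_irrational_div {c Δ : ℝ} (hc : Irrational c) (hΔ : Δ ≠ 0) :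
    Irrational Δ ∨ Irrational (Δ / c) := by
  by_cases hΔ_irr : Irrational Δ
  · exact .inl hΔ_irr
  obtain ⟨q, rfl⟩ := not_not.mp hΔ_irr
  exact .inr (hc.ratCast_div (by exact_mod_cast hΔ))

/-- If for every `μ ∈ [0,1)` there is a measurable set meeting every unit interval in
measure at least `μ` and avoiding all infinite arithmetic progressions with positive
irrational gap, then for every `λ ∈ [0,1)` there is a measurable set meeting every unit
interval in measure at least `λ` and avoiding all infinite arithmetic progressions with
any positive gap. -/
theorem stmt_5
    (h : ∀ μ : ℝ, μ ∈ Set.Ico (0 : ℝ) 1 → ∃ S : Set ℝ, MeasurableSet S ∧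
      (∀ a : ℝ, ENNReal.ofReal μ ≤ volume (S ∩ Set.Icc a (a + 1))) ∧
      ¬ ∃ x ∈ S, ∃ Δ : ℝ, 0 < Δ ∧ Irrational Δ ∧ ∀ n : ℕ, x + (n : ℝ) * Δ ∈ S) :
    ∀ lam : ℝ, lam ∈ Set.Ico (0 : ℝ) 1 → ∃ T : Set ℝ, MeasurableSet T ∧
      (∀ a : ℝ, ENNReal.ofReal lam ≤ volume (T ∩ Set.Icc a (a + 1))) ∧
      ¬ ∃ x ∈ T, ∃ Δ : ℝ, 0 < Δ ∧ ∀ n : ℕ, x + (n : ℝ) * Δ ∈ T := by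
  rintro lam ⟨hlam0, hlam1⟩
  set δ := (1 - lam) / 3 with hδ
  obtain ⟨S, hSm, hSvol, hSap⟩ := h (1 - δ) ⟨by linarith, by linarith⟩
  have hS : MissesAtMost S δ := by
    simpa using missesAtMost_one_sub hSm (by linarith) hSvol
  have hsqrt2 : √2 ≤ 2 := by nlinarith [Real.sq_sqrt (zero_le_two : (0 : ℝ) ≤ 2)]
  refine ⟨S ∩ √2 • S, hSm.inter (hSm.const_smul₀ _), ?_, ?_⟩
  · have hT : MissesAtMost (S ∩ √2 • S) (1 - lam) := fun a ↦
      ((hS.inter (hS.smul Real.one_lt_sqrt_two.le) (by positivity) (by positivity)) a).trans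
        (ENNReal.ofReal_le_ofReal (by nlinarith))
    exact hT.ofReal_le_volume_inter hlam1.le
  · rintro ⟨x, ⟨hxS, -⟩, Δ, hΔ, hAP⟩
    rcases irrational_sqrt_two.irrational_or_irrational_div hΔ.ne' with hirr | hirr
    · exact hSap ⟨x, hxS, Δ, hΔ, hirr, fun n ↦ (hAP n).1⟩
    · have hAP' := add_mul_mem_of_add_mul_mem_smul (by positivity) fun n ↦ (hAP n).2
      exact hSap ⟨x / √2, by simpa using hAP' 0, Δ / √2, by positivity, hirr, hAP'⟩
end

section
/- For each real number λ in (0,1) and each integer n ≥ 1, there exists a Lebesgue measurable subset S of ℝⁿ such that the n-dimensional Lebesgue measure of S ∩ Q is at least λ for every axis-parallel cube Q of unit side length (i.e., every set of the form ∏_{i=1}^n [a_i, a_i + 1]), but there is no x ∈ S and no nonzero vector Δ ∈ ℝⁿ such that x + kΔ ∈ S for all natural numbers k. -/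
/-!
In dimension one, remove from `ℝ` the `δ`-neighbourhoods of `ℤ` and of `√2 ℤ`. An arithmetic
progression `c + k d` with `d ≠ 0` has `d / 1` or `d / √2` irrational, so by Dirichlet's
approximation theorem its terms come arbitrarily close to `ℤ` or to `√2 ℤ` respectively, and it
meets the removed set. Both lattices have spacing at least `1`, so each unit interval loses
measure at most `8 δ`. In `ℝⁿ` take the `n`-fold product: a progression with nonzero gap is a
one-dimensional one with nonzero gap in some coordinate, and a unit cube keeps measure at least
`(1 - 8 δ) ^ n`, which is at least `λ` for small `δ`.
-/

open MeasureTheory Set Metric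

lemma exists_nat_add_mul_mem_Ico {s : ℝ} (hs : 0 < s) {c t : ℝ} (hct : c ≤ t) :
    ∃ m : ℕ, c + m * s ∈ Ico t (t + s) := by
  have ht : 0 ≤ (t - c) / s := div_nonneg (by linarith) hs.le
  refine ⟨⌈(t - c) / s⌉₊, ?_, ?_⟩
  · have := (div_le_iff₀ hs).1 (Nat.le_ceil ((t - c) / s))
    linarith
  · have := (lt_div_iff₀ hs).1 (sub_lt_iff_lt_add.2 (Nat.ceil_lt_add_one ht))
    linarith

lemma exists_nat_abs_add_mul_sub_intCast_lt {s : ℝ} (hs : s ≠ 0) (c : ℝ) :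
    ∃ (m : ℕ) (j : ℤ), |c + m * s - j| < |s| := by
  wlog hpos : 0 < s generalizing s c
  · obtain ⟨m, j, h⟩ := this (neg_ne_zero.2 hs) (-c) (neg_pos.2 ((not_lt.1 hpos).lt_of_ne hs))
    refine ⟨m, -j, ?_⟩
    rw [abs_neg] at h
    rw [← abs_neg]
    convert h using 2
    push_cast; ring
  obtain ⟨m, hm⟩ := exists_nat_add_mul_mem_Ico hpos (Int.le_ceil c)
  refine ⟨m, ⌈c⌉, ?_⟩
  rw [abs_of_pos hpos, abs_lt]
  constructor <;> linarith [hm.1, hm.2]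

lemma Irrational.exists_nat_abs_mul_sub_intCast_lt {θ : ℝ} (hθ : Irrational θ) {ε : ℝ}
    (hε : 0 < ε) : ∃ (q : ℕ) (p : ℤ), q * θ - p ≠ 0 ∧ |q * θ - p| < ε := by
  obtain ⟨N, hN⟩ := exists_nat_one_div_lt hε
  obtain ⟨q, hq, -, h⟩ := Real.exists_nat_abs_mul_sub_round_le θ N.succ_pos
  refine ⟨q, round (q * θ), ((hθ.natCast_mul hq.ne').sub_intCast _).ne_zero, h.trans_lt ?_⟩
  calc 1 / ((N.succ : ℕ) + 1 : ℝ) < 1 / (N + 1) := by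
        gcongr; linarith
    _ < ε := hN

lemma Irrational.exists_nat_abs_add_mul_sub_intCast_lt {θ : ℝ} (hθ : Irrational θ) (c : ℝ)
    {ε : ℝ} (hε : 0 < ε) : ∃ (k : ℕ) (j : ℤ), |c + k * θ - j| < ε := by
  obtain ⟨q, p, hs, hsε⟩ := hθ.exists_nat_abs_mul_sub_intCast_lt hε
  obtain ⟨m, j, h⟩ := _root_.exists_nat_abs_add_mul_sub_intCast_lt hs c
  refine ⟨m * q, j + m * p, (Eq.trans_lt ?_ h).trans hsε⟩
  congr 1; push_cast; ring

lemma Irrational.exists_nat_add_mul_mem_thickening_zmultiples {α d : ℝ} (h : Irrational (d / α))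
    (c : ℝ) {δ : ℝ} (hδ : 0 < δ) :
    ∃ k : ℕ, c + k * d ∈ thickening δ (AddSubgroup.zmultiples α : Set ℝ) := by
  have hα : α ≠ 0 := by rintro rfl; simp at h
  have hα' : 0 < |α| := abs_pos.2 hα
  obtain ⟨k, j, hk⟩ := h.exists_nat_abs_add_mul_sub_intCast_lt (c / α) (div_pos hδ hα')
  refine ⟨k, mem_thickening_iff.2 ⟨j * α, ⟨j, zsmul_eq_mul _ _⟩, ?_⟩⟩
  have : c + k * d - j * α = α * (c / α + k * (d / α) - j) := by field_simp
  rw [Real.dist_eq, this, abs_mul, ← lt_div_iff₀' hα']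
  exact hk

lemma exists_nat_add_mul_mem_thickening_zmultiples_one_union_sqrt_two {d : ℝ} (hd : d ≠ 0)
    (c : ℝ) {δ : ℝ} (hδ : 0 < δ) :
    ∃ k : ℕ, c + k * d ∈ thickening δ (AddSubgroup.zmultiples (1 : ℝ) : Set ℝ) ∪
      thickening δ (AddSubgroup.zmultiples √2 : Set ℝ) := by
  by_cases hirr : Irrational d
  · obtain ⟨k, hk⟩ := (div_one d ▸ hirr).exists_nat_add_mul_mem_thickening_zmultiples c hδ
    exact ⟨k, Or.inl hk⟩
  · obtain ⟨q, rfl⟩ : d ∈ range ((↑) : ℚ → ℝ) := not_not.1 hirr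
    have hq : q ≠ 0 := by rintro rfl; simp at hd
    obtain ⟨k, hk⟩ :=
      (irrational_sqrt_two.ratCast_div hq).exists_nat_add_mul_mem_thickening_zmultiples c hδ
    exact ⟨k, Or.inr hk⟩

lemma volume_thickening_zmultiples_inter_Icc_le {α δ : ℝ} (hα : 1 ≤ α) (hδ₀ : 0 ≤ δ)
    (hδ : δ ≤ 1 / 2) (a : ℝ) :
    volume (thickening δ (AddSubgroup.zmultiples α : Set ℝ) ∩ Icc a (a + 1)) ≤
      ENNReal.ofReal (4 * δ) := by
  have hα₀ : 0 < α := by linarith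
  set l := ⌈(a - δ) / α⌉
  have hl : a - δ ≤ l * α := (div_le_iff₀ hα₀).1 (Int.le_ceil _)
  have cover : thickening δ (AddSubgroup.zmultiples α : Set ℝ) ∩ Icc a (a + 1) ⊆
      ball (l * α) δ ∪ ball ((l + 1 : ℤ) * α) δ := by
    rintro y ⟨hy, hya, hyb⟩
    obtain ⟨_, ⟨j, rfl⟩, hj⟩ := mem_thickening_iff.1 hy
    simp only [zsmul_eq_mul, Real.dist_eq, abs_lt] at hj
    have hlj : l ≤ j := Int.ceil_le.2 ((div_le_iff₀ hα₀).2 (by linarith))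
    -- only `l α` and `(l + 1) α` can lie within `δ` of `[a, a + 1]`, as `1 + 2 δ ≤ 2 ≤ 2 α`
    have hjl : j < l + 2 := by
      have : (j : ℝ) * α < (l + 2) * α := by nlinarith
      exact_mod_cast lt_of_mul_lt_mul_right this hα₀.le
    obtain rfl | rfl : j = l ∨ j = l + 1 := by omega
    · left; rw [mem_ball, Real.dist_eq, abs_lt]; constructor <;> linarith
    · right; rw [mem_ball, Real.dist_eq, abs_lt]; constructor <;> linarith
  calc _ ≤ volume (ball (l * α) δ ∪ ball ((l + 1 : ℤ) * α) δ) := measure_mono cover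
    _ ≤ volume (ball (l * α) δ) + volume (ball ((l + 1 : ℤ) * α) δ) := measure_union_le _ _
    _ = ENNReal.ofReal (4 * δ) := by
      rw [Real.volume_ball, Real.volume_ball, ← ENNReal.ofReal_add (by positivity) (by positivity)]
      ring_nf

def ContainsInfiniteAP {E : Type*} [AddCommGroup E] [Module ℝ E] (S : Set E) : Prop :=
  ∃ x ∈ S, ∃ Δ : E, Δ ≠ 0 ∧ ∀ k : ℕ, x + (k : ℝ) • Δ ∈ S

lemma ContainsInfiniteAP.exists_of_pi {ι : Type*} {E : ι → Type*} [∀ i, AddCommGroup (E i)]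
    [∀ i, Module ℝ (E i)] {T : ∀ i, Set (E i)} (h : ContainsInfiniteAP (univ.pi T)) :
    ∃ i, ContainsInfiniteAP (T i) := by
  obtain ⟨x, hx, Δ, hΔ, hAP⟩ := h
  obtain ⟨i, hi⟩ := Function.ne_iff.1 hΔ
  exact ⟨i, x i, hx i trivial, Δ i, hi, fun k => hAP k i trivial⟩

theorem exists_measurableSet_real_le_volume_inter_Icc_not_containsInfiniteAP {μ : ℝ}
    (hμ : μ ∈ Ico 0 1) :
    ∃ T : Set ℝ, MeasurableSet T ∧
      (∀ a, ENNReal.ofReal μ ≤ volume (T ∩ Icc a (a + 1))) ∧ ¬ ContainsInfiniteAP T := by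
  obtain ⟨hμ₀, hμ₁⟩ := hμ
  set δ := (1 - μ) / 8 with hδ_def
  have hδ₀ : 0 < δ := by linarith
  have hδ : δ ≤ 1 / 2 := by linarith
  set H := thickening δ (AddSubgroup.zmultiples (1 : ℝ) : Set ℝ) ∪
    thickening δ (AddSubgroup.zmultiples √2 : Set ℝ)
  refine ⟨Hᶜ, (isOpen_thickening.union isOpen_thickening).measurableSet.compl, fun a => ?_, ?_⟩
  · have hH : volume (H ∩ Icc a (a + 1)) ≤ ENNReal.ofReal (8 * δ) := by
      rw [union_inter_distrib_right]
      refine (measure_union_le _ _).trans ?_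
      rw [show 8 * δ = 4 * δ + 4 * δ by ring, ENNReal.ofReal_add (by positivity) (by positivity)]
      gcongr
      · exact volume_thickening_zmultiples_inter_Icc_le le_rfl hδ₀.le hδ a
      · exact volume_thickening_zmultiples_inter_Icc_le Real.one_lt_sqrt_two.le hδ₀.le hδ a
    calc ENNReal.ofReal μ = ENNReal.ofReal 1 - ENNReal.ofReal (8 * δ) := by
          rw [← ENNReal.ofReal_sub _ (by positivity), hδ_def]; ring_nf
      _ ≤ volume (Icc a (a + 1)) - volume (H ∩ Icc a (a + 1)) := by
          rw [Real.volume_Icc, add_sub_cancel_left]; gcongr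
      _ ≤ volume (Icc a (a + 1) \ (H ∩ Icc a (a + 1))) := le_measure_sdiff
      _ = volume (Hᶜ ∩ Icc a (a + 1)) := by congr 1; ext; simp [and_comm]
  · rintro ⟨c, hc, d, hd, hAP⟩
    obtain ⟨k, hk⟩ := exists_nat_add_mul_mem_thickening_zmultiples_one_union_sqrt_two hd c hδ₀
    exact hAP k hk

lemma exists_mem_Ico_le_pow {lam : ℝ} (h : lam < 1) (n : ℕ) :
    ∃ μ ∈ Ico (0 : ℝ) 1, lam ≤ μ ^ n := by
  have hpow : ∀ᶠ μ in nhdsWithin (1 : ℝ) (Iio 1), lam < μ ^ n :=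
    ((continuous_pow n).tendsto' 1 1 (one_pow n)).mono_left nhdsWithin_le_nhds |>.eventually
      (lt_mem_nhds h)
  have hIco : ∀ᶠ μ in nhdsWithin (1 : ℝ) (Iio 1), μ ∈ Ico 0 1 := Ico_mem_nhdsLT one_pos
  obtain ⟨μ, hμ, hμn⟩ := (hIco.and hpow).exists
  exact ⟨μ, hμ, hμn.le⟩

theorem stmt_6_general (lam : ℝ) (hlam : lam ∈ Set.Ioo (0 : ℝ) 1) (n : ℕ) :
    ∃ S : Set (Fin n → ℝ), MeasurableSet S ∧
      (∀ a : Fin n → ℝ, ENNReal.ofReal lam ≤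
        volume (S ∩ Set.univ.pi fun i => Set.Icc (a i) (a i + 1))) ∧
      ¬ ∃ x ∈ S, ∃ Δ : Fin n → ℝ, Δ ≠ 0 ∧ ∀ k : ℕ, x + (k : ℝ) • Δ ∈ S := by
  obtain ⟨μ, hμ, hlam_le⟩ := exists_mem_Ico_le_pow hlam.2 n
  obtain ⟨T, hT, hTvol, hTAP⟩ :=
    exists_measurableSet_real_le_volume_inter_Icc_not_containsInfiniteAP hμ
  refine ⟨univ.pi fun _ => T, .univ_pi fun _ => hT, fun a => ?_, fun hAP => ?_⟩
  · calc ENNReal.ofReal lam ≤ ∏ _i : Fin n, ENNReal.ofReal μ := by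
          rw [Finset.prod_const, Finset.card_fin, ← ENNReal.ofReal_pow hμ.1]
          exact ENNReal.ofReal_le_ofReal hlam_le
      _ ≤ ∏ i, volume (T ∩ Icc (a i) (a i + 1)) := Finset.prod_le_prod' fun i _ => hTvol (a i)
      _ = _ := by rw [← volume_pi_pi, pi_inter_distrib]
  · obtain ⟨_, hi⟩ := ContainsInfiniteAP.exists_of_pi hAP
    exact hTAP hi

/-- For each `λ ∈ (0,1)` and `n ≥ 1` there is a measurable `S ⊆ ℝⁿ` meeting every
axis-parallel unit cube in measure at least `λ`, containing no infinite arithmetic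
progression with nonzero gap vector. -/
theorem stmt_6 (lam : ℝ) (hlam : lam ∈ Set.Ioo (0 : ℝ) 1) (n : ℕ) (hn : 1 ≤ n) :
    ∃ S : Set (Fin n → ℝ), MeasurableSet S ∧
      (∀ a : Fin n → ℝ, ENNReal.ofReal lam ≤
        volume (S ∩ Set.univ.pi fun i => Set.Icc (a i) (a i + 1))) ∧
      ¬ ∃ x ∈ S, ∃ Δ : Fin n → ℝ, Δ ≠ 0 ∧ ∀ k : ℕ, x + (k : ℝ) • Δ ∈ S :=
  stmt_6_general lam hlam n
end

section
/- If S is a subset of ℝ whose complement ℝ \ S has finite Lebesgue measure, then S contains a two-sided infinite arithmetic progression: there exist x ∈ S and a nonzero real number Δ such that x + kΔ ∈ S for every integer k. -/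
/-!
Fix `x ∈ S` and let `E = Sᶜ - x`. A gap `Δ` fails only if `k Δ ∈ E` for some `k ≠ 0`, and the
gaps `Δ ∈ [M, 2M]` with `k Δ ∈ E` form a set of measure `|E ∩ k [M, 2M]| / |k|`. A point `t`
lies in at most `|t| / M` of the intervals `k [M, 2M]`, each time with weight
`1 / |k| ≤ 2M / |t|`, so summing over `k` the bad gaps in `[M, 2M]` have measure at most `4 |E|`,
which is less than `M` once `M` is large.
-/

open MeasureTheory Set ENNReal

lemma tsum_indicator_Icc_mul_le_two {M : ℝ} (hM : 0 < M) (s : ℝ) :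
    ∑' n : ℕ, (Icc ((n + 1 : ℝ) * M) ((n + 1 : ℝ) * (2 * M))).indicator
      (fun _ => ENNReal.ofReal (n + 1 : ℝ)⁻¹) s ≤ 2 := by
  set f : ℕ → ℝ≥0∞ := fun n => (Icc ((n + 1 : ℝ) * M) ((n + 1 : ℝ) * (2 * M))).indicator
    (fun _ => ENNReal.ofReal (n + 1 : ℝ)⁻¹) s
  rcases lt_or_ge s M with hsM | hMs
  · have hf : ∀ n, f n = 0 := fun n => indicator_of_notMem (fun hn => by
      have : M ≤ (n + 1 : ℝ) * M :=
        le_mul_of_one_le_left hM.le (by linarith [n.cast_nonneg (α := ℝ)])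
      linarith [hn.1]) _
    rw [ENNReal.tsum_eq_zero.mpr hf]
    exact zero_le
  have hs : 0 < s := hM.trans_le hMs
  set N := ⌊s / M⌋₊
  have hf_out : ∀ n ∉ Finset.range N, f n = 0 := fun n hn => indicator_of_notMem (fun hmem => by
    have hNn : (N : ℝ) ≤ n := by exact_mod_cast not_lt.mp (Finset.mem_range.not.mp hn)
    have hsN : s < (N + 1 : ℝ) * M := (div_lt_iff₀ hM).mp (Nat.lt_floor_add_one _)
    nlinarith [hmem.1]) _
  have hf_le : ∀ n ∈ Finset.range N, f n ≤ ENNReal.ofReal (2 * M / s) := fun n _ => by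
    by_cases hmem : s ∈ Icc ((n + 1 : ℝ) * M) ((n + 1 : ℝ) * (2 * M))
    · refine (indicator_of_mem hmem _).trans_le (ENNReal.ofReal_le_ofReal ?_)
      rw [le_div_iff₀ hs, inv_mul_le_iff₀ (by positivity)]
      linarith [hmem.2]
    · exact (indicator_of_notMem hmem _).trans_le zero_le
  calc ∑' n, f n = ∑ n ∈ Finset.range N, f n := tsum_eq_sum hf_out
    _ ≤ N * ENNReal.ofReal (2 * M / s) := by
      simpa using Finset.sum_le_card_nsmul _ _ _ hf_le
    _ ≤ ENNReal.ofReal (s / M) * ENNReal.ofReal (2 * M / s) := by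
      gcongr
      rw [← ENNReal.ofReal_natCast]
      exact ENNReal.ofReal_le_ofReal (Nat.floor_le (by positivity))
    _ = 2 := by
      rw [← ENNReal.ofReal_mul (by positivity), show s / M * (2 * M / s) = 2 by field_simp,
        ENNReal.ofReal_ofNat]

lemma volume_Icc_inter_preimage_mul {c : ℝ} (hc : 0 < c) (a b : ℝ) (E : Set ℝ) :
    volume (Icc a b ∩ (c * ·) ⁻¹' E) =
      ENNReal.ofReal c⁻¹ * volume (E ∩ Icc (c * a) (c * b)) := by
  have hpre : Icc a b ∩ (c * ·) ⁻¹' E = (c * ·) ⁻¹' (E ∩ Icc (c * a) (c * b)) := by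
    ext Δ
    simp only [mem_inter_iff, mem_Icc, mem_preimage, mul_le_mul_iff_right₀ hc]
    tauto
  rw [hpre, Real.volume_preimage_mul_left hc.ne', abs_of_pos (inv_pos.mpr hc)]

lemma volume_iUnion_Icc_inter_preimage_nat_mul_le {M : ℝ} (hM : 0 < M) (E : Set ℝ) :
    volume (⋃ n : ℕ, Icc M (2 * M) ∩ ((n + 1 : ℝ) * ·) ⁻¹' E) ≤ 2 * volume E := by
  set I : ℕ → Set ℝ := fun n => Icc ((n + 1 : ℝ) * M) ((n + 1 : ℝ) * (2 * M))
  have hterm : ∀ n : ℕ, volume (Icc M (2 * M) ∩ ((n + 1 : ℝ) * ·) ⁻¹' E)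
      = ∫⁻ t, (I n).indicator (fun _ => ENNReal.ofReal (n + 1 : ℝ)⁻¹) t ∂volume.restrict E := by
    intro n
    rw [volume_Icc_inter_preimage_mul (by positivity),
      lintegral_indicator_const measurableSet_Icc, Measure.restrict_apply measurableSet_Icc,
      inter_comm]
  calc volume (⋃ n : ℕ, Icc M (2 * M) ∩ ((n + 1 : ℝ) * ·) ⁻¹' E)
      ≤ ∑' n : ℕ, volume (Icc M (2 * M) ∩ ((n + 1 : ℝ) * ·) ⁻¹' E) := measure_iUnion_le _
    _ = ∫⁻ t, ∑' n : ℕ, (I n).indicator (fun _ => ENNReal.ofReal (n + 1 : ℝ)⁻¹) t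
          ∂volume.restrict E := by
      simp_rw [hterm]
      exact (lintegral_tsum fun n =>
        (measurable_const.indicator measurableSet_Icc).aemeasurable).symm
    _ ≤ ∫⁻ _, 2 ∂volume.restrict E := lintegral_mono (tsum_indicator_Icc_mul_le_two hM)
    _ = 2 * volume E := by rw [lintegral_const, Measure.restrict_apply_univ]

lemma volume_setOf_int_mul_mem_le {M : ℝ} (hM : 0 < M) (E : Set ℝ) :
    volume {Δ ∈ Icc M (2 * M) | ∃ k : ℤ, k ≠ 0 ∧ (k : ℝ) * Δ ∈ E} ≤ 4 * volume E := by
  have hsub : {Δ ∈ Icc M (2 * M) | ∃ k : ℤ, k ≠ 0 ∧ (k : ℝ) * Δ ∈ E} ⊆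
      (⋃ n : ℕ, Icc M (2 * M) ∩ ((n + 1 : ℝ) * ·) ⁻¹' E) ∪
        ⋃ n : ℕ, Icc M (2 * M) ∩ ((n + 1 : ℝ) * ·) ⁻¹' (-E) := by
    rintro Δ ⟨hΔ, k, hk, hkΔ⟩
    obtain ⟨m, rfl | rfl⟩ := Int.eq_nat_or_neg k
    all_goals
      obtain ⟨n, rfl⟩ := Nat.exists_eq_succ_of_ne_zero (n := m) (by rintro rfl; simp at hk)
      push_cast at hkΔ
    · exact Or.inl (mem_iUnion.mpr ⟨n, hΔ, hkΔ⟩)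
    · exact Or.inr (mem_iUnion.mpr ⟨n, hΔ, by rwa [mem_preimage, mem_neg, ← neg_mul]⟩)
  calc _ ≤ _ := (measure_mono hsub).trans (measure_union_le _ _)
    _ ≤ 2 * volume E + 2 * volume (-E) :=
      add_le_add (volume_iUnion_Icc_inter_preimage_nat_mul_le hM E)
        (volume_iUnion_Icc_inter_preimage_nat_mul_le hM (-E))
    _ = 4 * volume E := by rw [Measure.measure_neg, ← add_mul]; norm_num

/-- If the complement of `S ⊆ ℝ` has finite Lebesgue measure, then `S` contains a
two-sided infinite arithmetic progression. -/
theorem stmt_7 (S : Set ℝ) (h : volume Sᶜ < ⊤) :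
    ∃ x ∈ S, ∃ Δ : ℝ, Δ ≠ 0 ∧ ∀ k : ℤ, x + (k : ℝ) * Δ ∈ S := by
  obtain ⟨x, hx⟩ : S.Nonempty := by
    rw [nonempty_iff_ne_empty]
    rintro rfl
    simp at h
  set E := (x + ·) ⁻¹' Sᶜ
  have hE : volume E = volume Sᶜ := measure_preimage_add _ _ _
  obtain ⟨M, hM⟩ := ENNReal.exists_nat_gt (mul_lt_top (ofNat_lt_top (n := 4)) h).ne
  have hM0 : (0 : ℝ) < M := by exact_mod_cast pos_of_gt hM
  have hbad : volume {Δ ∈ Icc (M : ℝ) (2 * M) | ∃ k : ℤ, k ≠ 0 ∧ (k : ℝ) * Δ ∈ E}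
      < volume (Icc (M : ℝ) (2 * M)) := by
    rw [Real.volume_Icc, show 2 * (M : ℝ) - M = M by ring, ofReal_natCast]
    exact (volume_setOf_int_mul_mem_le hM0 E).trans_lt (hE ▸ hM)
  obtain ⟨Δ, hΔ, hgood⟩ := not_subset.mp fun hsub => (measure_mono hsub).not_gt hbad
  refine ⟨x, hx, Δ, (hM0.trans_le hΔ.1).ne', fun k => ?_⟩
  by_cases hk : k = 0
  · simpa [hk] using hx
  · by_contra hkS
    exact hgood ⟨hΔ, k, hk, hkS⟩
end

section
/- The set S = ⋃_{n ∈ ℕ} [n², n² + 1] ⊆ ℝ does not contain any infinite arithmetic progression: there is no x ∈ S and no nonzero real number Δ such that x + kΔ ∈ S for all natural numbers k. -/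
/-- The set `⋃_{n ∈ ℕ} [n², n²+1]` contains no infinite arithmetic progression with
nonzero gap. -/
theorem stmt_10 :
    ¬ ∃ x ∈ ⋃ n : ℕ, Set.Icc ((n : ℝ) ^ 2) ((n : ℝ) ^ 2 + 1), ∃ Δ : ℝ, Δ ≠ 0 ∧
      ∀ k : ℕ, x + (k : ℝ) * Δ ∈ ⋃ n : ℕ, Set.Icc ((n : ℝ) ^ 2) ((n : ℝ) ^ 2 + 1) := by
  rintro ⟨x, hx, Δ, hΔ, hAP⟩
  simp only [Set.mem_iUnion, Set.mem_Icc] at hAP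
  rcases lt_or_gt_of_ne hΔ with hneg | hpos
  · -- Δ < 0 : the progression becomes negative, but S ⊆ [0, ∞)
    obtain ⟨k, hk⟩ := exists_nat_gt (x / (-Δ))
    have hk' : x < (k : ℝ) * (-Δ) := (div_lt_iff₀ (neg_pos.mpr hneg)).mp hk
    obtain ⟨n, hn1, _⟩ := hAP k
    have hn0 : (0 : ℝ) ≤ (n : ℝ) ^ 2 := by positivity
    nlinarith
  · -- Δ > 0
    -- pick k₀ with x + k₀ Δ > (Δ+1)²
    obtain ⟨k₀, hk₀⟩ := exists_nat_gt (((Δ + 1) ^ 2 - x) / Δ)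
    have hk₀' : (Δ + 1) ^ 2 - x < (k₀ : ℝ) * Δ := (div_lt_iff₀ hpos).mp hk₀
    obtain ⟨n₀, hn1, hn2⟩ := hAP k₀
    have hΔn₀ : Δ < (n₀ : ℝ) := by
      have h1 : Δ ^ 2 < (n₀ : ℝ) ^ 2 := by nlinarith
      exact lt_of_pow_lt_pow_left₀ 2 (by positivity) h1
    -- all later terms are ≤ n₀² + 1
    have key : ∀ j : ℕ, x + ((k₀ + j : ℕ) : ℝ) * Δ ≤ (n₀ : ℝ) ^ 2 + 1 := by
      intro j
      induction j with
      | zero => simpa using hn2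
      | succ j ih =>
        obtain ⟨m, hm1, hm2⟩ := hAP (k₀ + (j + 1))
        have hstep : x + ((k₀ + (j + 1) : ℕ) : ℝ) * Δ
            = (x + ((k₀ + j : ℕ) : ℝ) * Δ) + Δ := by push_cast; ring
        have hlt : (m : ℝ) ^ 2 < ((n₀ : ℝ) + 1) ^ 2 := by
          have := hm1
          rw [hstep] at this
          nlinarith [Nat.cast_nonneg (α := ℝ) n₀]
        have hmn : (m : ℝ) < (n₀ : ℝ) + 1 :=
          lt_of_pow_lt_pow_left₀ 2 (by positivity) hlt
        have hmn' : m ≤ n₀ := by exact_mod_cast Nat.lt_succ_iff.mp (by exact_mod_cast hmn)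
        have : (m : ℝ) ^ 2 ≤ (n₀ : ℝ) ^ 2 := by
          have : (m : ℝ) ≤ (n₀ : ℝ) := by exact_mod_cast hmn'
          nlinarith [Nat.cast_nonneg (α := ℝ) m]
        linarith [hm2]
    -- but the progression is unbounded
    obtain ⟨J, hJ⟩ := exists_nat_gt (((n₀ : ℝ) ^ 2 + 1 - x) / Δ)
    have hJ' : (n₀ : ℝ) ^ 2 + 1 - x < (J : ℝ) * Δ := (div_lt_iff₀ hpos).mp hJ
    have hk₀Δ : (0 : ℝ) ≤ (k₀ : ℝ) * Δ := by positivity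
    have := key J
    push_cast at this
    nlinarith
end

section
/- Let N ≥ 1 be an integer, let Δ > 0 and x₀ be real numbers with x₀ > ((2N+1)/N)·Δ, and let b > 0 be a real number satisfying b > x₀ + Δ and (N/(N+1))·b > Δ. Define x_n = x₀ + nΔ for n ∈ ℕ, and let M be the largest natural number with x_M < b. Then the number of indices n with 0 ≤ n ≤ M and x_n ∈ [b/(N+1), b) is strictly greater than (N/(N+1))·(M+1). -/
/-!
Every index `n ≤ M` has `x₀ + nΔ < b`, so the indices missing from the count are exactly those
with `x₀ + nΔ < b / (N + 1)`; there are at most `⌈(b / (N + 1) - x₀) / Δ⌉` of them. Maximality of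
`M` gives `(M + 1) Δ ≥ b - x₀`, and `N x₀ ≥ (N + 1) Δ` makes `N + 1` times that ceiling smaller
than `M + 1`.
-/

open Finset

lemma card_filter_mem_Ico_add_card_filter_lt {α β : Type*} [LinearOrder β] (s : Finset α)
    (f : α → β) {c b : β} (hs : ∀ n ∈ s, f n < b) :
    #{n ∈ s | f n ∈ Set.Ico c b} + #{n ∈ s | f n < c} = #s := by
  have hfilter : {n ∈ s | f n ∈ Set.Ico c b} = {n ∈ s | ¬ f n < c} :=
    filter_congr fun n hn => by simp [hs n hn]
  rw [hfilter, add_comm]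
  exact card_filter_add_card_filter_not _

lemma card_filter_add_mul_lt_le_ceil (s : Finset ℕ) {x₀ Δ a : ℝ} (hΔ : 0 < Δ) :
    #{n ∈ s | x₀ + (n : ℕ) * Δ < a} ≤ ⌈(a - x₀) / Δ⌉₊ := by
  calc #{n ∈ s | x₀ + (n : ℕ) * Δ < a}
      ≤ #(range ⌈(a - x₀) / Δ⌉₊) := card_le_card fun n hn => by
        rw [mem_filter] at hn
        rw [mem_range, Nat.lt_ceil, lt_div_iff₀ hΔ]
        linarith [hn.2]
    _ = ⌈(a - x₀) / Δ⌉₊ := card_range _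

lemma mul_ceil_lt_of_mul_le {x₀ Δ a k L : ℝ} (hΔ : 0 < Δ) (hk : 0 < k) (hL : 0 < L)
    (h : k * (a - x₀ + Δ) ≤ L * Δ) : k * ⌈(a - x₀) / Δ⌉₊ < L := by
  rcases le_or_gt (a - x₀) 0 with ha | ha
  · rw [Nat.ceil_eq_zero.mpr (div_nonpos_of_nonpos_of_nonneg ha hΔ.le)]
    simpa using hL
  · calc k * ⌈(a - x₀) / Δ⌉₊
        < k * ((a - x₀) / Δ + 1) := by
          gcongr; exact Nat.ceil_lt_add_one (div_nonneg ha.le hΔ.le)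
      _ = k * (a - x₀ + Δ) / Δ := by field_simp
      _ ≤ L := by rwa [div_le_iff₀ hΔ]

lemma succ_mul_card_filter_lt_lt {N M : ℕ} {x₀ Δ b : ℝ} (s : Finset ℕ) (hΔ : 0 < Δ)
    (hx₀ : ((N : ℝ) + 1) * Δ ≤ N * x₀) (hMΔ : b ≤ x₀ + (M + 1) * Δ) :
    ((N : ℝ) + 1) * #{n ∈ s | x₀ + (n : ℕ) * Δ < b / (N + 1)} < M + 1 := by
  have hN : (0 : ℝ) < N + 1 := by positivity
  calc ((N : ℝ) + 1) * #{n ∈ s | x₀ + (n : ℕ) * Δ < b / (N + 1)}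
      ≤ ((N : ℝ) + 1) * ⌈(b / (N + 1) - x₀) / Δ⌉₊ := by
        gcongr; exact_mod_cast card_filter_add_mul_lt_le_ceil s hΔ
    _ < M + 1 := mul_ceil_lt_of_mul_le hΔ hN (by positivity) (by
        rw [mul_add, mul_sub, mul_div_cancel₀ _ hN.ne']; linarith)

lemma lt_card_filter_add_mul_mem_Ico {N M : ℕ} {x₀ Δ b : ℝ} (hΔ : 0 < Δ)
    (hx₀ : ((N : ℝ) + 1) * Δ ≤ N * x₀) (hM : x₀ + M * Δ < b) (hMΔ : b ≤ x₀ + (M + 1) * Δ) :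
    (N : ℝ) / (N + 1) * (M + 1) <
      #{n ∈ range (M + 1) | x₀ + (n : ℕ) * Δ ∈ Set.Ico (b / (N + 1)) b} := by
  have hbelow : ∀ n ∈ range (M + 1), x₀ + (n : ℝ) * Δ < b := fun n hn => by
    have : (n : ℝ) ≤ M := by exact_mod_cast Nat.lt_succ_iff.mp (mem_range.mp hn)
    nlinarith
  have hsplit : (#{n ∈ range (M + 1) | x₀ + (n : ℕ) * Δ ∈ Set.Ico (b / (N + 1)) b} : ℝ)
      + #{n ∈ range (M + 1) | x₀ + (n : ℕ) * Δ < b / (N + 1)} = M + 1 := by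
    exact_mod_cast (card_filter_mem_Ico_add_card_filter_lt _ _ hbelow).trans (card_range _)
  have hlow := succ_mul_card_filter_lt_lt (range (M + 1)) hΔ hx₀ hMΔ
  rw [div_mul_eq_mul_div, div_lt_iff₀ (by positivity)]
  linear_combination hlow - (N + 1) * hsplit

open scoped Classical

theorem stmt_13_general (N : ℕ) (hN : 1 ≤ N) (Δ x₀ b : ℝ) (hΔ : 0 < Δ)
    (hx₀ : x₀ > ((2 * (N : ℝ) + 1) / N) * Δ)
    (M : ℕ) (hM : x₀ + (M : ℝ) * Δ < b)
    (hMmax : ∀ n : ℕ, x₀ + (n : ℝ) * Δ < b → n ≤ M) :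
    ((N : ℝ) / ((N : ℝ) + 1)) * ((M : ℝ) + 1) <
      (((Finset.range (M + 1)).filter
        (fun n => x₀ + (n : ℝ) * Δ ∈ Set.Ico (b / ((N : ℝ) + 1)) b)).card : ℝ) := by
  -- `n` in the statement is elaborated as a real, ranging over the image of `range (M + 1)`.
  have hrange : ((do let a ← range (M + 1); pure ((a : ℕ) : ℝ)) : Finset ℝ)
      = (range (M + 1)).image (fun a : ℕ => (a : ℝ)) := by simp
  rw [hrange, filter_image, card_image_of_injective _ Nat.cast_injective]
  have hNpos : (0 : ℝ) < N := by exact_mod_cast hN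
  have hx₀N : ((N : ℝ) + 1) * Δ ≤ N * x₀ := by
    rw [gt_iff_lt, div_mul_eq_mul_div, div_lt_iff₀ hNpos] at hx₀
    nlinarith
  have hMΔ : b ≤ x₀ + ((M : ℝ) + 1) * Δ := by
    by_contra! h
    have := hMmax (M + 1) (by push_cast; linarith)
    omega
  exact lt_card_filter_add_mul_mem_Ico hΔ hx₀N hM hMΔ

/-- Counting estimate: under the stated hypotheses, more than an `N/(N+1)` fraction of
the first `M+1` terms of the progression `x₀ + nΔ` lie in `[b/(N+1), b)`. -/
theorem stmt_13 (N : ℕ) (hN : 1 ≤ N) (Δ x₀ b : ℝ) (hΔ : 0 < Δ)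
    (hx₀ : x₀ > ((2 * (N : ℝ) + 1) / N) * Δ) (hb : 0 < b) (hb1 : b > x₀ + Δ)
    (hb2 : ((N : ℝ) / ((N : ℝ) + 1)) * b > Δ)
    (M : ℕ) (hM : x₀ + (M : ℝ) * Δ < b)
    (hMmax : ∀ n : ℕ, x₀ + (n : ℝ) * Δ < b → n ≤ M) :
    ((N : ℝ) / ((N : ℝ) + 1)) * ((M : ℝ) + 1) <
      (((Finset.range (M + 1)).filter
        (fun n => x₀ + (n : ℝ) * Δ ∈ Set.Ico (b / ((N : ℝ) + 1)) b)).card : ℝ) :=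
  stmt_13_general N hN Δ x₀ b hΔ hx₀ M hM hMmax
end
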